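/- Fix ε > 0. Let f_0, f_1, …, f_T : X → Y be a sequence of models such that for each 1 ≤ i ≤ T, f_i = ListUpdate(f_{i−1},(g_i,h_i)) where (g_i,h_i) is a (μ_i,Δ_i)-certificate of sub-optimality for f_{i−1} with μ_i > 0, Δ_i > 0, and μ_i·Δ_i ≥ ε. Then T ≤ L(D, f_0)/ε; in particular T ≤ 1/ε. -/

import Mathlib

open MeasureTheory

/-- The measure of a group `g` under a distribution `D` on `X × Y`:
`μ_g(D) = D {(x,y) | g x = true}`. -/
noncomputable def groupMeasure {X Y : Type} [MeasurableSpace (X × Y)]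
    (D : Measure (X × Y)) (g : X → Bool) : ℝ :=
  (D {p : X × Y | g p.1 = true}).toReal

/-- The group-conditional loss `L(D, f, g) = E_{(x,y)∼D}[ℓ(f x, y) | g x = true]`,
written on a finite type as the `g`-restricted sum divided by the mass of `g`. -/
noncomputable def condLoss {X Y : Type} [Fintype X] [Fintype Y] [MeasurableSpace (X × Y)]
    (D : Measure (X × Y)) (ℓ : Y → Y → ℝ) (f : X → Y) (g : X → Bool) : ℝ :=
  (∑ p : X × Y, if g p.1 = true then (D {p}).toReal * ℓ (f p.1) p.2 else 0)
    / groupMeasure D g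

/-- The overall loss `L(D,f) = E_{(x,y)∼D}[ℓ(f x, y)]` on a finite type. -/
noncomputable def totalLoss {X Y : Type} [Fintype X] [Fintype Y] [MeasurableSpace (X × Y)]
    (D : Measure (X × Y)) (ℓ : Y → Y → ℝ) (f : X → Y) : ℝ :=
  ∑ p : X × Y, (D {p}).toReal * ℓ (f p.1) p.2

/-- `ListUpdate(f,(g,h))`: predict with `h` on group `g`, and with `f` elsewhere. -/
def listUpdate {X Y : Type} (f h : X → Y) (g : X → Bool) : X → Y :=
  fun x => if g x then h x else f x

/-- `(g,h)` is a `(μ,Δ)`-certificate of sub-optimality for `f` under `D`: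
`μ_g(D) ≥ μ` and `L(D,f,g) ≥ L(D,h,g) + Δ`. -/
def IsCertificate {X Y : Type} [Fintype X] [Fintype Y] [MeasurableSpace (X × Y)]
    (D : Measure (X × Y)) (ℓ : Y → Y → ℝ) (f : X → Y)
    (g : X → Bool) (h : X → Y) (μ Δ : ℝ) : Prop :=
  μ ≤ groupMeasure D g ∧ condLoss D ℓ h g + Δ ≤ condLoss D ℓ f g

/-- `f` is `(ε,C)`-Bayes optimal: for every `(g,h) ∈ C` with `μ_g(D) > 0`,
`L(D,f,g) ≤ L(D,h,g) + ε/μ_g(D)`. -/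
def ApproxBayesOptimal {X Y : Type} [Fintype X] [Fintype Y] [MeasurableSpace (X × Y)]
    (D : Measure (X × Y)) (ℓ : Y → Y → ℝ)
    (C : Set ((X → Bool) × (X → Y))) (ε : ℝ) (f : X → Y) : Prop :=
  ∀ gh ∈ C, 0 < groupMeasure D gh.1 →
    condLoss D ℓ f gh.1 ≤ condLoss D ℓ gh.2 gh.1 + ε / groupMeasure D gh.1

/-!
Each ListUpdate step along a `(μ, Δ)`-certificate lowers the overall loss by at least
`μ_g(D) · (L(D,f,g) - L(D,h,g)) ≥ μ · Δ ≥ ε`, since the two models differ only on the group `g`.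
The loss starts at `L(D, f₀) ≤ 1` and never becomes negative, so at most `L(D, f₀)/ε` steps fit.
-/

section Loss

variable {X Y : Type} [Fintype X] [Fintype Y] [MeasurableSpace (X × Y)]
  (D : Measure (X × Y)) (ℓ : Y → Y → ℝ)

lemma totalLoss_nonneg (hℓ : ∀ yhat y : Y, 0 ≤ ℓ yhat y) (f : X → Y) :
    0 ≤ totalLoss D ℓ f :=
  Finset.sum_nonneg fun _ _ => mul_nonneg ENNReal.toReal_nonneg (hℓ _ _)

lemma totalLoss_le_one [MeasurableSingletonClass (X × Y)] [IsProbabilityMeasure D]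
    (hℓ : ∀ yhat y : Y, ℓ yhat y ≤ 1) (f : X → Y) : totalLoss D ℓ f ≤ 1 :=
  calc totalLoss D ℓ f ≤ ∑ p : X × Y, D.real {p} :=
        Finset.sum_le_sum fun _ _ => mul_le_of_le_one_right ENNReal.toReal_nonneg (hℓ _ _)
    _ = 1 := by simp

lemma totalLoss_sub_totalLoss_listUpdate {f h : X → Y} {g : X → Bool}
    (hg : groupMeasure D g ≠ 0) :
    totalLoss D ℓ f - totalLoss D ℓ (listUpdate f h g) =
      groupMeasure D g * (condLoss D ℓ f g - condLoss D ℓ h g) := by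
  rw [mul_sub, condLoss, condLoss, mul_div_cancel₀ _ hg, mul_div_cancel₀ _ hg, totalLoss,
    totalLoss, ← Finset.sum_sub_distrib, ← Finset.sum_sub_distrib]
  refine Finset.sum_congr rfl fun p _ => ?_
  cases hgp : g p.1 <;> simp [listUpdate, hgp]

lemma IsCertificate.totalLoss_listUpdate_add_le {f h : X → Y} {g : X → Bool} {μ Δ : ℝ}
    (hc : IsCertificate D ℓ f g h μ Δ) (hμ : 0 < μ) (hΔ : 0 ≤ Δ) :
    totalLoss D ℓ (listUpdate f h g) + μ * Δ ≤ totalLoss D ℓ f := by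
  obtain ⟨hμg, hgain⟩ := hc
  have hdrop := totalLoss_sub_totalLoss_listUpdate D ℓ (f := f) (h := h) (hμ.trans_le hμg).ne'
  have : μ * Δ ≤ groupMeasure D g * (condLoss D ℓ f g - condLoss D ℓ h g) :=
    mul_le_mul hμg (by linarith) hΔ (hμ.le.trans hμg)
  linarith

end Loss

lemma add_mul_le_of_forall_succ_add_le {a : ℕ → ℝ} {ε : ℝ} {T : ℕ}
    (hstep : ∀ i < T, a (i + 1) + ε ≤ a i) : a T + T * ε ≤ a 0 := by
  induction T with
  | zero => simp
  | succ n ih =>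
    have := ih fun i hi => hstep i (by omega)
    have := hstep n n.lt_succ_self
    push_cast
    linarith

theorem stmt_7_general {X Y : Type} [Fintype X] [Fintype Y]
    [MeasurableSpace (X × Y)] [MeasurableSingletonClass (X × Y)]
    (D : Measure (X × Y)) [IsProbabilityMeasure D]
    (ℓ : Y → Y → ℝ) (hℓ : ∀ yhat y : Y, 0 ≤ ℓ yhat y ∧ ℓ yhat y ≤ 1)
    (ε : ℝ) (hε : 0 < ε) (T : ℕ)
    (f : ℕ → X → Y) (g : ℕ → X → Bool) (h : ℕ → X → Y) (μ Δ : ℕ → ℝ)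
    (hstep : ∀ i : ℕ, 1 ≤ i → i ≤ T →
      f i = listUpdate (f (i - 1)) (h i) (g i) ∧
      IsCertificate D ℓ (f (i - 1)) (g i) (h i) (μ i) (Δ i) ∧
      0 < μ i ∧ 0 < Δ i ∧ ε ≤ μ i * Δ i) :
    (T : ℝ) ≤ totalLoss D ℓ (f 0) / ε ∧ (T : ℝ) ≤ 1 / ε := by
  have hdescent : ∀ i < T, totalLoss D ℓ (f (i + 1)) + ε ≤ totalLoss D ℓ (f i) := by
    intro i hi
    obtain ⟨hupdate, hcert, hμ, hΔ, hε_le⟩ := hstep (i + 1) (by omega) hi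
    simp only [Nat.add_sub_cancel] at hupdate hcert
    rw [hupdate]
    linarith [hcert.totalLoss_listUpdate_add_le D ℓ hμ hΔ.le]
  have hT := add_mul_le_of_forall_succ_add_le (a := fun i => totalLoss D ℓ (f i)) hdescent
  have hlast := totalLoss_nonneg D ℓ (fun a b => (hℓ a b).1) (f T)
  have hfirst := totalLoss_le_one D ℓ (fun a b => (hℓ a b).2) (f 0)
  constructor <;> rw [le_div_iff₀ hε] <;> linarith

/-- any sequence of ListUpdate steps, each driven by a `(μᵢ,Δᵢ)`-certificate of
sub-optimality with `μᵢ·Δᵢ ≥ ε`, has length at most `L(D,f₀)/ε ≤ 1/ε`. -/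
theorem stmt_7 {X Y : Type} [Fintype X] [Fintype Y] [Nonempty X] [Nonempty Y]
    [MeasurableSpace (X × Y)] [MeasurableSingletonClass (X × Y)]
    (D : Measure (X × Y)) [IsProbabilityMeasure D]
    (ℓ : Y → Y → ℝ) (hℓ : ∀ yhat y : Y, 0 ≤ ℓ yhat y ∧ ℓ yhat y ≤ 1)
    (ε : ℝ) (hε : 0 < ε) (T : ℕ)
    (f : ℕ → X → Y) (g : ℕ → X → Bool) (h : ℕ → X → Y) (μ Δ : ℕ → ℝ)
    (hstep : ∀ i : ℕ, 1 ≤ i → i ≤ T →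
      f i = listUpdate (f (i - 1)) (h i) (g i) ∧
      IsCertificate D ℓ (f (i - 1)) (g i) (h i) (μ i) (Δ i) ∧
      0 < μ i ∧ 0 < Δ i ∧ ε ≤ μ i * Δ i) :
    (T : ℝ) ≤ totalLoss D ℓ (f 0) / ε ∧ (T : ℝ) ≤ 1 / ε :=
  stmt_7_general D ℓ hℓ ε hε T f g h μ Δ hstep
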